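/- Let f be the standard skew-normal density f(z) = 2 φ(z) Φ(λ z). Then S[f] ≥ (1/2) ln(2π e) − ln(4e); i.e., the negentropy E[ln(2Φ(λ W))] is at most ln(4e), where W has density f. -/

import Mathlib

open MeasureTheory Real Set

noncomputable def phi (x : ℝ) : ℝ := (Real.sqrt (2 * Real.pi))⁻¹ * Real.exp (-x ^ 2 / 2)

noncomputable def Phi (x : ℝ) : ℝ := ∫ t in Set.Iic x, phi t

/-!
Since `Φ ≤ 1`, the skew-normal density `f = 2 φ · Φ(λ ·)` is bounded by `2 φ ≤ 2 / √(2π)`, so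
`-f ln f ≥ f · ln (√(2π) / 2)` pointwise and `S[f] ≥ ½ ln (2π) - ln 2`, which dominates
`½ ln (2πe) - ln (4e)`. In the same way `ln (2Φ) ≤ ln 2` bounds the negentropy by `ln 2`.
That `∫ f = 1` is Azzalini's symmetry argument: `f(z) + f(-z) = 2 φ(z)`. Integrability of
`f ln f` comes from `negMulLog (2φ · Φ) = Φ · negMulLog (2φ) + 2φ · negMulLog Φ`, where
`negMulLog Φ ∈ [0, 1]` and `negMulLog (2φ)` is `φ` times a quadratic.
-/

open ProbabilityTheory

lemma phi_eq_gaussianPDFReal : phi = gaussianPDFReal 0 1 := by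
  ext x
  simp [phi, gaussianPDFReal]

lemma phi_pos (x : ℝ) : 0 < phi x :=
  phi_eq_gaussianPDFReal ▸ gaussianPDFReal_pos 0 1 x one_ne_zero

lemma phi_le (x : ℝ) : phi x ≤ (√(2 * π))⁻¹ :=
  mul_le_of_le_one_right (by positivity) (exp_le_one_iff.2 (by nlinarith [sq_nonneg x]))

lemma phi_neg (x : ℝ) : phi (-x) = phi x := by
  simp [phi]

lemma integrable_phi : Integrable phi :=
  phi_eq_gaussianPDFReal ▸ integrable_gaussianPDFReal 0 1

lemma integral_phi : ∫ x, phi x = 1 := by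
  rw [phi_eq_gaussianPDFReal]
  exact integral_gaussianPDFReal_eq_one 0 one_ne_zero

lemma integrable_sq_mul_phi : Integrable fun x => x ^ 2 * phi x := by
  have h := (integrable_rpow_mul_exp_neg_mul_sq (b := 1 / 2) (by norm_num)
    (s := 2) (by norm_num)).const_mul (√(2 * π))⁻¹
  refine h.congr (ae_of_all _ fun x => ?_)
  simp only [phi, rpow_two]
  ring_nf

lemma log_two_mul_phi (x : ℝ) : log (2 * phi x) = log (2 * (√(2 * π))⁻¹) - x ^ 2 / 2 := by
  rw [phi, ← mul_assoc, log_mul (by positivity) (exp_ne_zero _), log_exp]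
  ring

lemma log_two_mul_inv_sqrt_two_pi : log (2 * (√(2 * π))⁻¹) = log 2 - log (2 * π) / 2 := by
  rw [log_mul two_ne_zero (by positivity), log_inv, log_sqrt (by positivity)]
  ring

lemma Phi_nonneg (x : ℝ) : 0 ≤ Phi x :=
  setIntegral_nonneg measurableSet_Iic fun t _ => (phi_pos t).le

lemma Phi_le_one (x : ℝ) : Phi x ≤ 1 :=
  integral_phi ▸ setIntegral_le_integral integrable_phi (ae_of_all _ fun t => (phi_pos t).le)

lemma norm_Phi_le_one (x : ℝ) : ‖Phi x‖ ≤ 1 :=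
  (norm_of_nonneg (Phi_nonneg x)).trans_le (Phi_le_one x)

lemma monotone_Phi : Monotone Phi := fun _ _ hab =>
  setIntegral_mono_set integrable_phi.integrableOn (ae_of_all _ fun t => (phi_pos t).le)
    (Iic_subset_Iic.2 hab).eventuallyLE

lemma Phi_add_Phi_neg (x : ℝ) : Phi x + Phi (-x) = 1 := by
  have h : Phi (-x) = ∫ t in Ioi x, phi t := by
    rw [Phi, ← integral_comp_neg_Ioi]
    simp only [phi_neg]
  rw [h, Phi, intervalIntegral.integral_Iic_add_Ioi integrable_phi.integrableOn
    integrable_phi.integrableOn, integral_phi]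

theorem integral_two_mul_mul_eq_of_add_neg_eq_one {g h : ℝ → ℝ} (hg : ∀ x, g (-x) = g x)
    (hh : ∀ x, h x + h (-x) = 1) (hgh : Integrable fun x => g x * h x) :
    ∫ x, 2 * g x * h x = ∫ x, g x := by
  have hreflect : ∫ x, g x * h (-x) = ∫ x, g x * h x := by
    simpa only [hg, neg_neg] using integral_neg_eq_self (fun x => g x * h x) volume
  have hgh' : Integrable fun x => g x * h (-x) := by
    simpa only [hg, neg_neg] using hgh.comp_neg
  calc ∫ x, 2 * g x * h x = (∫ x, g x * h x) + ∫ x, g x * h (-x) := by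
        rw [hreflect, ← two_mul, ← integral_const_mul]
        simp only [mul_assoc]
    _ = ∫ x, (g x * h x + g x * h (-x)) := (integral_add hgh hgh').symm
    _ = ∫ x, g x := by simp only [← mul_add, hh, mul_one]

theorem MeasureTheory.Integrable.mul_negMulLog_comp {α : Type*} [MeasurableSpace α] {μ : Measure α}
    {g h : α → ℝ} (hg : Integrable g μ) (hh : Measurable h) (h0 : ∀ x, 0 ≤ h x)
    (h1 : ∀ x, h x ≤ 1) : Integrable (fun x => g x * negMulLog (h x)) μ := by
  refine hg.mul_bdd (c := 1) (continuous_negMulLog.measurable.comp hh).aestronglyMeasurable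
    (ae_of_all _ fun x => ?_)
  rw [norm_of_nonneg (negMulLog_nonneg (h0 x) (h1 x))]
  linarith [negMulLog_le_one_sub_self (h0 x), h0 x]

lemma mul_log_le_mul_log {x y : ℝ} (hx : 0 ≤ x) (hxy : x ≤ y) : x * log x ≤ x * log y := by
  rcases hx.eq_or_lt with rfl | hx
  · simp
  · exact mul_le_mul_of_nonneg_left (log_le_log hx hxy) hx.le

noncomputable def skewNormalPDF (lam z : ℝ) : ℝ := 2 * phi z * Phi (lam * z)

section SkewNormal

variable (lam : ℝ)

lemma measurable_Phi_const_mul : Measurable fun z => Phi (lam * z) :=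
  monotone_Phi.measurable.comp (measurable_const_mul lam)

lemma integrable_phi_mul_Phi_const_mul : Integrable fun z => phi z * Phi (lam * z) :=
  integrable_phi.mul_bdd (measurable_Phi_const_mul lam).aestronglyMeasurable
    (ae_of_all _ fun _ => norm_Phi_le_one _)

lemma integrable_skewNormalPDF : Integrable (skewNormalPDF lam) :=
  ((integrable_phi_mul_Phi_const_mul lam).const_mul 2).congr
    (ae_of_all _ fun _ => (mul_assoc _ _ _).symm)

lemma integral_skewNormalPDF : ∫ z, skewNormalPDF lam z = 1 :=
  (integral_two_mul_mul_eq_of_add_neg_eq_one phi_neg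
    (fun z => by simpa only [mul_neg] using Phi_add_Phi_neg (lam * z))
    (integrable_phi_mul_Phi_const_mul lam)).trans integral_phi

lemma skewNormalPDF_nonneg (z : ℝ) : 0 ≤ skewNormalPDF lam z :=
  mul_nonneg (mul_nonneg zero_le_two (phi_pos z).le) (Phi_nonneg _)

lemma skewNormalPDF_le (z : ℝ) : skewNormalPDF lam z ≤ 2 * (√(2 * π))⁻¹ :=
  calc skewNormalPDF lam z ≤ 2 * phi z :=
        mul_le_of_le_one_right (mul_nonneg zero_le_two (phi_pos z).le) (Phi_le_one _)
    _ ≤ 2 * (√(2 * π))⁻¹ := by linarith [phi_le z]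

lemma negMulLog_two_mul_phi (z : ℝ) :
    negMulLog (2 * phi z) = z ^ 2 * phi z - 2 * log (2 * (√(2 * π))⁻¹) * phi z := by
  rw [negMulLog, log_two_mul_phi]
  ring

lemma integrable_negMulLog_skewNormalPDF :
    Integrable fun z => negMulLog (skewNormalPDF lam z) := by
  have hgauss : Integrable fun z => negMulLog (2 * phi z) :=
    (integrable_sq_mul_phi.sub (integrable_phi.const_mul _)).congr
      (ae_of_all _ fun z => (negMulLog_two_mul_phi z).symm)
  have hskew : Integrable fun z => Phi (lam * z) * negMulLog (2 * phi z) :=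
    hgauss.bdd_mul (measurable_Phi_const_mul lam).aestronglyMeasurable
      (ae_of_all _ fun _ => norm_Phi_le_one _)
  exact (hskew.add ((integrable_phi.const_mul 2).mul_negMulLog_comp
    (measurable_Phi_const_mul lam) (fun _ => Phi_nonneg _) fun _ => Phi_le_one _)).congr
      (ae_of_all _ fun _ => (negMulLog_mul _ _).symm)

theorem le_integral_negMulLog_skewNormalPDF :
    log (2 * π) / 2 - log 2 ≤ ∫ z, negMulLog (skewNormalPDF lam z) := by
  have hpt (z : ℝ) :
      (log (2 * π) / 2 - log 2) * skewNormalPDF lam z ≤ negMulLog (skewNormalPDF lam z) := by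
    have h := mul_log_le_mul_log (skewNormalPDF_nonneg lam z) (skewNormalPDF_le lam z)
    rw [log_two_mul_inv_sqrt_two_pi] at h
    rw [negMulLog]
    linarith
  calc log (2 * π) / 2 - log 2 = ∫ z, (log (2 * π) / 2 - log 2) * skewNormalPDF lam z := by
        rw [integral_const_mul, integral_skewNormalPDF, mul_one]
    _ ≤ ∫ z, negMulLog (skewNormalPDF lam z) :=
        integral_mono ((integrable_skewNormalPDF lam).const_mul _)
          (integrable_negMulLog_skewNormalPDF lam) hpt

theorem integral_log_two_mul_Phi_mul_skewNormalPDF_le :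
    ∫ z, log (2 * Phi (lam * z)) * skewNormalPDF lam z ≤ log 2 := by
  have hpt (z : ℝ) : log (2 * Phi (lam * z)) * skewNormalPDF lam z
      = log 2 * skewNormalPDF lam z - 2 * phi z * negMulLog (Phi (lam * z)) := by
    have h := negMulLog_mul 2 (Phi (lam * z))
    simp only [negMulLog, skewNormalPDF] at h ⊢
    linear_combination (-phi z) * h
  have hint : Integrable fun z => 2 * phi z * negMulLog (Phi (lam * z)) :=
    (integrable_phi.const_mul 2).mul_negMulLog_comp (measurable_Phi_const_mul lam)
      (fun _ => Phi_nonneg _) fun _ => Phi_le_one _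
  calc ∫ z, log (2 * Phi (lam * z)) * skewNormalPDF lam z
        = log 2 - ∫ z, 2 * phi z * negMulLog (Phi (lam * z)) := by
        simp only [hpt]
        rw [integral_sub ((integrable_skewNormalPDF lam).const_mul _) hint, integral_const_mul,
          integral_skewNormalPDF, mul_one]
    _ ≤ log 2 := sub_le_self _ (integral_nonneg fun z => mul_nonneg
        (mul_nonneg zero_le_two (phi_pos z).le) (negMulLog_nonneg (Phi_nonneg _) (Phi_le_one _)))

end SkewNormal

/-- Lower bound for the skew-normal Shannon entropy:
    S[f] ≥ (1/2) ln(2π e) − ln(4e), i.e. the negentropy E[ln(2Φ(λW))] is at most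
    ln(4e), where W has the standard skew-normal density f(z) = 2 φ(z) Φ(λ z). -/
theorem skew_normal_entropy_lower_bound (lam : ℝ) :
    (1 / 2) * Real.log (2 * Real.pi * Real.exp 1) - Real.log (4 * Real.exp 1) ≤
        -∫ z : ℝ, (2 * phi z * Phi (lam * z)) * Real.log (2 * phi z * Phi (lam * z)) ∧
      ∫ w : ℝ, Real.log (2 * Phi (lam * w)) * (2 * phi w * Phi (lam * w)) ≤
        Real.log (4 * Real.exp 1) := by
  have hlog4e : log (4 * exp 1) = 2 * log 2 + 1 := by
    rw [log_mul (by norm_num) (exp_ne_zero 1), log_exp, show (4 : ℝ) = 2 ^ 2 by norm_num,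
      log_pow, Nat.cast_ofNat]
  have hlog2πe : log (2 * π * exp 1) = log (2 * π) + 1 := by
    rw [log_mul (by positivity) (exp_ne_zero 1), log_exp]
  have hentropy : -∫ z, (2 * phi z * Phi (lam * z)) * log (2 * phi z * Phi (lam * z))
      = ∫ z, negMulLog (skewNormalPDF lam z) := by
    simp only [negMulLog, neg_mul, integral_neg, skewNormalPDF]
  refine ⟨?_, ?_⟩
  · rw [hentropy]
    linarith [le_integral_negMulLog_skewNormalPDF lam, log_nonneg one_le_two]
  · have h := integral_log_two_mul_Phi_mul_skewNormalPDF_le lam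
    unfold skewNormalPDF at h
    linarith [log_nonneg one_le_two]
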